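/- With the pathwise optimum F_0 from the Bellman recursion along random trajectories, the dual estimate satisfies V^↑_0(y, x) = V_0(y, x) + E[ F_0(y, X_·) | X_0 = x ], where F_0(y, X_·) = sup over admissible policies of Σ_{s=0}^{T-1} ( H_s(h_s, X_s) + E_s[V_{s+1}(y_{s+1}, X_{s+1})] − V_s(y_s, X_s) ). -/

import Mathlib

open MeasureTheory Finset

section Setup

variable {Ω : Type*}

/-- Control value at time `t`, starting from `y0` at time `t0`:
`y_t = y0 - ∑_{t0 ≤ s < t} h_s`. -/
noncomputable def ctrl {E : Type*} [AddCommGroup E] (y0 : E) (h : ℕ → Ω → E)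
    (t0 t : ℕ) (ω : Ω) : E :=
  y0 - ∑ s ∈ Finset.Ico t0 t, h s ω

/-- A `K`-admissible exercise policy on `{t0, …, T}` started at `y0`:
each `h_s` is `ℱ s`-measurable and a.s. `h_s(ω) ∈ K_s(y_s, X_s(ω))`. -/
def Admissible {E S : Type*} [AddCommGroup E] [MeasurableSpace E]
    {m0 : MeasurableSpace Ω} (μ : Measure Ω) (ℱ : Filtration ℕ m0) (T : ℕ)
    (K : ℕ → E → S → Set E) (X : ℕ → Ω → S) (t0 : ℕ) (y0 : E)
    (h : ℕ → Ω → E) : Prop :=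
  (∀ s, Measurable[ℱ s] (h s)) ∧
  (∀ᵐ ω ∂μ, ∀ s, t0 ≤ s → s ≤ T → h s ω ∈ K s (ctrl y0 h t0 s ω) (X s ω))

/-- The value of a policy at time `t0`:
`V^π_{t0} = E[∑_{s=t0}^T H_s(h_s, X_s) | ℱ_{t0}]`. -/
noncomputable def polValue {E S : Type*}
    {m0 : MeasurableSpace Ω} (μ : Measure Ω) (ℱ : Filtration ℕ m0) (T : ℕ)
    (H : ℕ → E → S → ℝ) (X : ℕ → Ω → S) (t0 : ℕ)
    (h : ℕ → Ω → E) : Ω → ℝ :=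
  μ[fun ω => ∑ s ∈ Finset.Icc t0 T, H s (h s ω) (X s ω) | ℱ t0]

/-- The value function `V^{K,*}_{t0}(y0)` as the supremum of policy values over
the `K`-admissible policies started at `y0` at time `t0`. -/
noncomputable def valueFn {E S : Type*} [AddCommGroup E] [MeasurableSpace E]
    {m0 : MeasurableSpace Ω} (μ : Measure Ω) (ℱ : Filtration ℕ m0) (T : ℕ)
    (H : ℕ → E → S → ℝ) (K : ℕ → E → S → Set E) (X : ℕ → Ω → S)
    (t0 : ℕ) (y0 : E) : Ω → ℝ :=
  fun ω => ⨆ π : {h : ℕ → Ω → E // Admissible μ ℱ T K X t0 y0 h},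
    polValue μ ℱ T H X t0 π.1 ω

end Setup

section Dual

variable {Ω : Type*}

/-- One-step conditional expectation of an approximation family:
`condV μ ℱ V X s y' = E[V_{s+1}(y', X_{s+1}) | ℱ s]`. -/
noncomputable def condV {m0 : MeasurableSpace Ω} (μ : Measure Ω)
    (ℱ : Filtration ℕ m0) {l d : ℕ}
    (V : ℕ → (Fin l → ℝ) → (Fin d → ℝ) → ℝ) (X : ℕ → Ω → (Fin d → ℝ))
    (s : ℕ) (y' : Fin l → ℝ) : Ω → ℝ :=
  μ[fun ω => V (s + 1) y' (X (s + 1) ω) | ℱ s]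

/-- The dual upper estimate `V^↑_t(y)` built from the approximation family `V`
via its Doob-decomposition martingale increments
`M^{y}_{s+1} - M^{y}_s = V_{s+1}(y, X_{s+1}) - E_s[V_{s+1}(y, X_{s+1})]`. -/
noncomputable def dualEstimate {m0 : MeasurableSpace Ω} (μ : Measure Ω)
    (ℱ : Filtration ℕ m0) {l d : ℕ} (T : ℕ)
    (H : ℕ → (Fin l → ℝ) → (Fin d → ℝ) → ℝ)
    (K : ℕ → (Fin l → ℝ) → (Fin d → ℝ) → Set (Fin l → ℝ))
    (V : ℕ → (Fin l → ℝ) → (Fin d → ℝ) → ℝ) (X : ℕ → Ω → (Fin d → ℝ))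
    (t : ℕ) (y : Fin l → ℝ) : Ω → ℝ :=
  μ[fun ω => ⨆ π : {h : ℕ → Ω → (Fin l → ℝ) // Admissible μ ℱ T K X t y h},
      ((∑ s ∈ Finset.Ico t T,
          (H s (π.1 s ω) (X s ω)
            - V (s + 1) (ctrl y π.1 t (s + 1) ω) (X (s + 1) ω)
            + condV μ ℱ V X s (ctrl y π.1 t (s + 1) ω) ω))
        + H T (π.1 T ω) (X T ω)) | ℱ t]

end Dual


/-!
Telescoping the martingale increments `E_s[V_{s+1}] - V_{s+1}` against `V_s` turns the dual
payoff of every policy into `V_0(y, X_0)` plus its pathwise gain `∑ (H_s + E_s[V_{s+1}] - V_s)`,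
the terminal term `H_T` being absorbed by `V_T = H_T`. The shift `V_0(y, X_0)` does not depend
on the policy, so it leaves the supremum, and, being `ℱ 0`-measurable, also the conditional
expectation. On a finite space every function is bounded, so integrability reduces to
measurability, and the pathwise supremum is measurable because every term is constant on the
measurable atoms.
-/

section MeasurableAtom

variable {Ω β : Type*} {m : MeasurableSpace Ω} [MeasurableSpace β]

lemma Measurable.eq_of_mem_measurableAtom [MeasurableSingletonClass β] {f : Ω → β}
    (hf : Measurable f) {x y : Ω} (hy : y ∈ measurableAtom x) : f y = f x :=
  mem_of_mem_measurableAtom hy (hf (measurableSet_singleton (f x))) rfl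

lemma measurable_of_eq_of_mem_measurableAtom [Countable Ω] {f : Ω → β}
    (hf : ∀ x, ∀ y ∈ measurableAtom x, f y = f x) : Measurable f := by
  intro B _
  have hB : f ⁻¹' B = ⋃ x ∈ f ⁻¹' B, measurableAtom x := by
    refine subset_antisymm (fun x hx => Set.mem_biUnion hx (mem_measurableAtom_self x)) ?_
    simp only [Set.iUnion_subset_iff]
    intro x hx y hy
    rwa [Set.mem_preimage, hf x y hy]
  rw [hB]
  exact .biUnion (Set.to_countable _) fun x _ => .measurableAtom_of_countable x

end MeasurableAtom

theorem MeasureTheory.AEStronglyMeasurable.integrable_of_finite {Ω E : Type*}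
    {m : MeasurableSpace Ω} {μ : Measure Ω} [Finite Ω] [IsFiniteMeasure μ]
    [NormedAddCommGroup E] {f : Ω → E} (hf : AEStronglyMeasurable f μ) : Integrable f μ := by
  obtain ⟨C, hC⟩ := (Set.finite_range fun x => ‖f x‖).bddAbove
  exact Integrable.of_bound hf C (ae_of_all _ fun x => hC ⟨x, rfl⟩)

lemma ctrl_eq_of_mem_measurableAtom {Ω E : Type*} {m : MeasurableSpace Ω} [AddCommGroup E]
    [MeasurableSpace E] [MeasurableSingletonClass E] {y0 : E} {h : ℕ → Ω → E}
    (hh : ∀ s, Measurable (h s)) (t0 t : ℕ) {ω ω' : Ω} (hω' : ω' ∈ measurableAtom ω) :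
    ctrl y0 h t0 t ω' = ctrl y0 h t0 t ω := by
  simp only [ctrl, fun s => (hh s).eq_of_mem_measurableAtom hω']

section PathwiseDual

variable {Ω : Type*} {m0 : MeasurableSpace Ω} (μ : Measure Ω) (ℱ : Filtration ℕ m0)
  {l d : ℕ} (T : ℕ) (H : ℕ → (Fin l → ℝ) → (Fin d → ℝ) → ℝ)
  (K : ℕ → (Fin l → ℝ) → (Fin d → ℝ) → Set (Fin l → ℝ))
  (V : ℕ → (Fin l → ℝ) → (Fin d → ℝ) → ℝ) (X : ℕ → Ω → (Fin d → ℝ)) (t : ℕ) (y : Fin l → ℝ)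

noncomputable def pathwiseIncrement (h : ℕ → Ω → (Fin l → ℝ)) (s : ℕ) (ω : Ω) : ℝ :=
  H s (h s ω) (X s ω) + condV μ ℱ V X s (ctrl y h t (s + 1) ω) ω - V s (ctrl y h t s ω) (X s ω)

/-- The pathwise optimum `F_t(y, X_·)`. -/
noncomputable def pathwiseOptimum (ω : Ω) : ℝ :=
  ⨆ π : {h : ℕ → Ω → (Fin l → ℝ) // Admissible μ ℱ T K X t y h},
    ∑ s ∈ Ico t T, pathwiseIncrement μ ℱ H V X t y π.1 s ω

noncomputable def dualPayoff (h : ℕ → Ω → (Fin l → ℝ)) (ω : Ω) : ℝ :=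
  (∑ s ∈ Ico t T,
      (H s (h s ω) (X s ω) - V (s + 1) (ctrl y h t (s + 1) ω) (X (s + 1) ω)
        + condV μ ℱ V X s (ctrl y h t (s + 1) ω) ω))
    + H T (h T ω) (X T ω)

variable {μ ℱ T H K V X t y}

lemma dualPayoff_eq_sum_pathwiseIncrement_add (ht : t ≤ T) {h : ℕ → Ω → (Fin l → ℝ)} {ω : Ω}
    (hterm : V T (ctrl y h t T ω) (X T ω) = H T (h T ω) (X T ω)) :
    dualPayoff μ ℱ T H V X t y h ω
      = ∑ s ∈ Ico t T, pathwiseIncrement μ ℱ H V X t y h s ω + V t y (X t ω) := by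
  have htel := sum_Ico_sub (fun s => V s (ctrl y h t s ω) (X s ω)) ht
  have hsplit : ∑ s ∈ Ico t T,
      (H s (h s ω) (X s ω) - V (s + 1) (ctrl y h t (s + 1) ω) (X (s + 1) ω)
        + condV μ ℱ V X s (ctrl y h t (s + 1) ω) ω)
      = ∑ s ∈ Ico t T, pathwiseIncrement μ ℱ H V X t y h s ω
        - ∑ s ∈ Ico t T,
          (V (s + 1) (ctrl y h t (s + 1) ω) (X (s + 1) ω) - V s (ctrl y h t s ω) (X s ω)) := by
    rw [← sum_sub_distrib]
    exact sum_congr rfl fun s _ => by rw [pathwiseIncrement]; ring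
  have hstart : ctrl y h t t ω = y := by simp [ctrl]
  rw [dualPayoff, hsplit, htel, hterm, hstart]
  ring

lemma abs_condV_le {C : ℝ} (hCV : ∀ s y' x, |V s y' x| ≤ C) (s : ℕ) (y' : Fin l → ℝ) :
    ∀ᵐ ω ∂μ, |condV μ ℱ V X s y' ω| ≤ C :=
  ae_bdd_abs_condExp_of_ae_bdd_abs (ae_of_all _ fun ω => hCV (s + 1) y' (X (s + 1) ω))

lemma pathwiseIncrement_le {C : ℝ} (hCH : ∀ s hv x, |H s hv x| ≤ C)
    (hCV : ∀ s y' x, |V s y' x| ≤ C) {ω : Ω} (hω : ∀ s y', |condV μ ℱ V X s y' ω| ≤ C)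
    (h : ℕ → Ω → (Fin l → ℝ)) (s : ℕ) :
    pathwiseIncrement μ ℱ H V X t y h s ω ≤ 3 * C := by
  have hH := (abs_le.1 (hCH s (h s ω) (X s ω))).2
  have hc := (abs_le.1 (hω s (ctrl y h t (s + 1) ω))).2
  have hV := (abs_le.1 (hCV s (ctrl y h t s ω) (X s ω))).1
  rw [pathwiseIncrement]
  linarith

lemma ae_iSup_dualPayoff_eq [Countable Ω] (ht : t ≤ T) {C : ℝ}
    (hCH : ∀ s hv x, |H s hv x| ≤ C) (hCV : ∀ s y' x, |V s y' x| ≤ C)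
    (hVT : ∀ y' hv : Fin l → ℝ, ∀ᵐ ω ∂μ, hv ∈ K T y' (X T ω) → V T y' (X T ω) = H T hv (X T ω))
    [Nonempty {h : ℕ → Ω → (Fin l → ℝ) // Admissible μ ℱ T K X t y h}] :
    ∀ᵐ ω ∂μ, ⨆ π : {h : ℕ → Ω → (Fin l → ℝ) // Admissible μ ℱ T K X t y h},
      dualPayoff μ ℱ T H V X t y π.1 ω = V t y (X t ω) + pathwiseOptimum μ ℱ T H K V X t y ω := by
  -- On a countable space, "a.e." means "at every point of positive mass", which lets the bounds
  -- on `condV`, one for each of uncountably many controls, hold simultaneously.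
  rw [ae_iff_of_countable]
  intro ω hω
  have hcond s y' := ae_iff_of_countable.1 (abs_condV_le (μ := μ) (ℱ := ℱ) (X := X) hCV s y') ω hω
  have hterm (π : {h : ℕ → Ω → (Fin l → ℝ) // Admissible μ ℱ T K X t y h}) :=
    ae_iff_of_countable.1 (hVT _ _) ω hω (ae_iff_of_countable.1 π.2.2 ω hω T ht le_rfl)
  have hbdd : BddAbove (Set.range fun π : {h : ℕ → Ω → (Fin l → ℝ) // Admissible μ ℱ T K X t y h} =>
      ∑ s ∈ Ico t T, pathwiseIncrement μ ℱ H V X t y π.1 s ω) := by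
    refine ⟨#(Ico t T) • (3 * C), ?_⟩
    rintro _ ⟨π, rfl⟩
    exact sum_le_card_nsmul _ _ _ fun s _ => pathwiseIncrement_le hCH hCV hcond π.1 s
  calc _ = ⨆ π : {h : ℕ → Ω → (Fin l → ℝ) // Admissible μ ℱ T K X t y h},
        (∑ s ∈ Ico t T, pathwiseIncrement μ ℱ H V X t y π.1 s ω + V t y (X t ω)) :=
        iSup_congr fun π => dualPayoff_eq_sum_pathwiseIncrement_add ht (hterm π)
    _ = pathwiseOptimum μ ℱ T H K V X t y ω + V t y (X t ω) :=
        ((OrderIso.addRight _).map_ciSup hbdd).symm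
    _ = _ := add_comm _ _

lemma pathwiseIncrement_eq_of_mem_measurableAtom (hX : ∀ s, Measurable[ℱ s] (X s))
    {h : ℕ → Ω → (Fin l → ℝ)} (hh : ∀ s, Measurable[ℱ s] (h s)) (s : ℕ) {ω ω' : Ω}
    (hω' : ω' ∈ measurableAtom ω) :
    pathwiseIncrement μ ℱ H V X t y h s ω' = pathwiseIncrement μ ℱ H V X t y h s ω := by
  have hX' r : X r ω' = X r ω := ((hX r).mono (ℱ.le r) le_rfl).eq_of_mem_measurableAtom hω'
  have hh' r : h r ω' = h r ω := ((hh r).mono (ℱ.le r) le_rfl).eq_of_mem_measurableAtom hω'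
  have hcond r y' : condV μ ℱ V X r y' ω' = condV μ ℱ V X r y' ω :=
    (stronglyMeasurable_condExp.measurable.mono (ℱ.le r) le_rfl).eq_of_mem_measurableAtom hω'
  simp only [pathwiseIncrement, hX', hh', hcond,
    ctrl_eq_of_mem_measurableAtom (fun r => (hh r).mono (ℱ.le r) le_rfl) _ _ hω']

lemma measurable_pathwiseOptimum [Countable Ω] (hX : ∀ s, Measurable[ℱ s] (X s)) :
    Measurable (pathwiseOptimum μ ℱ T H K V X t y) :=
  measurable_of_eq_of_mem_measurableAtom fun _ _ hω' => iSup_congr fun π => sum_congr rfl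
    fun s _ => pathwiseIncrement_eq_of_mem_measurableAtom hX π.2.1 s hω'

theorem dualEstimate_ae_eq [Finite Ω] [IsFiniteMeasure μ] (ht : t ≤ T)
    (hX : ∀ s, Measurable[ℱ s] (X s)) {C : ℝ}
    (hCH : ∀ s hv x, |H s hv x| ≤ C) (hCV : ∀ s y' x, |V s y' x| ≤ C)
    (hVT : ∀ y' hv : Fin l → ℝ, ∀ᵐ ω ∂μ, hv ∈ K T y' (X T ω) → V T y' (X T ω) = H T hv (X T ω))
    [Nonempty {h : ℕ → Ω → (Fin l → ℝ) // Admissible μ ℱ T K X t y h}] :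
    dualEstimate μ ℱ T H K V X t y =ᵐ[μ]
      fun ω => V t y (X t ω) + μ[pathwiseOptimum μ ℱ T H K V X t y | ℱ t] ω := by
  have hV : Measurable[ℱ t] fun ω => V t y (X t ω) :=
    measurable_of_eq_of_mem_measurableAtom fun _ _ hω' => by
      rw [(hX t).eq_of_mem_measurableAtom hω']
  have hVint : Integrable (fun ω => V t y (X t ω)) μ :=
    (hV.mono (ℱ.le t) le_rfl).aestronglyMeasurable.integrable_of_finite
  have hFint : Integrable (pathwiseOptimum μ ℱ T H K V X t y) μ :=
    (measurable_pathwiseOptimum hX).aestronglyMeasurable.integrable_of_finite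
  calc dualEstimate μ ℱ T H K V X t y
      = μ[fun ω => ⨆ π : {h : ℕ → Ω → (Fin l → ℝ) // Admissible μ ℱ T K X t y h},
          dualPayoff μ ℱ T H V X t y π.1 ω | ℱ t] := rfl
    _ =ᵐ[μ] μ[(fun ω => V t y (X t ω)) + pathwiseOptimum μ ℱ T H K V X t y | ℱ t] :=
        condExp_congr_ae (ae_iSup_dualPayoff_eq ht hCH hCV hVT)
    _ =ᵐ[μ] μ[fun ω => V t y (X t ω) | ℱ t] + μ[pathwiseOptimum μ ℱ T H K V X t y | ℱ t] :=
        condExp_add hVint hFint _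
    _ = _ := by rw [condExp_of_stronglyMeasurable (ℱ.le t) hV.stronglyMeasurable hVint]; rfl

end PathwiseDual

theorem dual_estimate_as_correction_general
    {Ω : Type*} [Fintype Ω] {m0 : MeasurableSpace Ω}
    (μ : Measure Ω) [IsProbabilityMeasure μ] (ℱ : Filtration ℕ m0)
    {l d : ℕ} (T : ℕ)
    (X : ℕ → Ω → (Fin d → ℝ)) (hX : ∀ t', Measurable[ℱ t'] (X t'))
    (H : ℕ → (Fin l → ℝ) → (Fin d → ℝ) → ℝ)
    (K : ℕ → (Fin l → ℝ) → (Fin d → ℝ) → Set (Fin l → ℝ))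
    (V : ℕ → (Fin l → ℝ) → (Fin d → ℝ) → ℝ)
    (C : ℝ) (hCH : ∀ s (hv : Fin l → ℝ) (x : Fin d → ℝ), |H s hv x| ≤ C)
    (hCV : ∀ s (y' : Fin l → ℝ) (x : Fin d → ℝ), |V s y' x| ≤ C)
    (hVT : ∀ y' hv : Fin l → ℝ, ∀ᵐ ω ∂μ, hv ∈ K T y' (X T ω) →
      V T y' (X T ω) = H T hv (X T ω))
    (y : Fin l → ℝ)
    (hadm : Nonempty {h : ℕ → Ω → (Fin l → ℝ) // Admissible μ ℱ T K X 0 y h})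
    -- the pathwise optimum `F_0` along the random trajectory
    (F0 : Ω → ℝ)
    (hF0 : ∀ ω, F0 ω = ⨆ π : {h : ℕ → Ω → (Fin l → ℝ) // Admissible μ ℱ T K X 0 y h},
      ∑ s ∈ Finset.range T,
        (H s (π.1 s ω) (X s ω)
          + condV μ ℱ V X s (ctrl y π.1 0 (s + 1) ω) ω
          - V s (ctrl y π.1 0 s ω) (X s ω))) :
    dualEstimate μ ℱ T H K V X 0 y =ᵐ[μ]
      fun ω => V 0 y (X 0 ω) + (μ[F0 | ℱ 0]) ω := by
  have hF : F0 = pathwiseOptimum μ ℱ T H K V X 0 y := by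
    funext ω
    simp only [hF0, pathwiseOptimum, pathwiseIncrement, range_eq_Ico]
  rw [hF]
  exact dualEstimate_ae_eq (Nat.zero_le T) hX hCH hCV hVT

/-- the dual estimate equals the a priori estimate plus the
conditional expectation of the pathwise optimum `F_0`. -/
theorem dual_estimate_as_correction
    {Ω : Type*} [Fintype Ω] {m0 : MeasurableSpace Ω}
    (μ : Measure Ω) [IsProbabilityMeasure μ] (ℱ : Filtration ℕ m0)
    {l d : ℕ} (T : ℕ)
    (X : ℕ → Ω → (Fin d → ℝ)) (hX : ∀ t', Measurable[ℱ t'] (X t'))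
    (H : ℕ → (Fin l → ℝ) → (Fin d → ℝ) → ℝ)
    (K : ℕ → (Fin l → ℝ) → (Fin d → ℝ) → Set (Fin l → ℝ))
    (V : ℕ → (Fin l → ℝ) → (Fin d → ℝ) → ℝ)
    (hVmeas : ∀ t' y', Measurable (V t' y'))
    (C : ℝ) (hCH : ∀ s (hv : Fin l → ℝ) (x : Fin d → ℝ), |H s hv x| ≤ C)
    (hCV : ∀ s (y' : Fin l → ℝ) (x : Fin d → ℝ), |V s y' x| ≤ C)
    (hVT : ∀ y' hv : Fin l → ℝ, ∀ᵐ ω ∂μ, hv ∈ K T y' (X T ω) →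
      V T y' (X T ω) = H T hv (X T ω))
    (y : Fin l → ℝ)
    (hadm : Nonempty {h : ℕ → Ω → (Fin l → ℝ) // Admissible μ ℱ T K X 0 y h})
    -- the pathwise optimum `F_0` along the random trajectory
    (F0 : Ω → ℝ)
    (hF0 : ∀ ω, F0 ω = ⨆ π : {h : ℕ → Ω → (Fin l → ℝ) // Admissible μ ℱ T K X 0 y h},
      ∑ s ∈ Finset.range T,
        (H s (π.1 s ω) (X s ω)
          + condV μ ℱ V X s (ctrl y π.1 0 (s + 1) ω) ω
          - V s (ctrl y π.1 0 s ω) (X s ω))) :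
    dualEstimate μ ℱ T H K V X 0 y =ᵐ[μ]
      fun ω => V 0 y (X 0 ω) + (μ[F0 | ℱ 0]) ω :=
  dual_estimate_as_correction_general μ ℱ T X hX H K V C hCH hCV hVT y hadm F0 hF0
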